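/- A probability density function f on ℝ is log-concave if and only if the function (x,y) ↦ f(x−y) is TP₂ on ℝ × ℝ, i.e. for all x₁ ≤ x₂ and y₁ ≤ y₂, f(x₁−y₁)·f(x₂−y₂) ≥ f(x₁−y₂)·f(x₂−y₁). -/

import Mathlib

/-!
If `f` is log-concave and `a ≤ b ≤ d`, then `b` and `a + d - b` are convex combinations of `a`
and `d` with swapped weights, so `f a * f d ≤ f b * f (a + d - b)`; for the kernel `f (x - y)`
this inequality is exactly TP₂.

Conversely, this inequality makes the support of `f` an interval on which `log f` is
Wright-concave, and integrability of `f` makes `log f` integrable on its compact subintervals.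
Wright-concave functions need not be concave (additive Hamel functions are Wright-affine), but
integrable ones are: after subtracting a chord, `e` vanishes at the ends of `[x, y]`, and
integrating the Wright inequality gives `(c - x) e c ≤ 2 ∫ u in x..c, e u`, which rules out a
negative minimum of this primitive, and `∫ u in x..2z-x, e u ≤ 2 (z - x) e z`, which then gives
`e z ≥ 0`.
-/

open MeasureTheory Set Filter

/-- `L` is totally positive of order 2 on `I × J`. -/
def IsTP2 (I J : Set ℝ) (L : ℝ → ℝ → ℝ) : Prop :=
  ∀ x₁ ∈ I, ∀ x₂ ∈ I, ∀ y₁ ∈ J, ∀ y₂ ∈ J,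
    x₁ ≤ x₂ → y₁ ≤ y₂ → L x₁ y₂ * L x₂ y₁ ≤ L x₁ y₁ * L x₂ y₂

theorem intervalIntegral.integral_comp_add_sub (e : ℝ → ℝ) (a b : ℝ) :
    ∫ u in a..b, e (a + b - u) = ∫ u in a..b, e u := by
  simp [intervalIntegral.integral_comp_sub_left]

def WrightConcaveOn (s : Set ℝ) (e : ℝ → ℝ) : Prop :=
  ∀ ⦃p⦄, p ∈ s → ∀ ⦃q⦄, q ∈ s → ∀ u, p ≤ u → u ≤ q → e p + e q ≤ e u + e (p + q - u)

namespace WrightConcaveOn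

variable {s t : Set ℝ} {e : ℝ → ℝ} {x y : ℝ}

theorem mono (h : WrightConcaveOn s e) (hts : t ⊆ s) : WrightConcaveOn t e :=
  fun _ hp _ hq u hpu huq ↦ h (hts hp) (hts hq) u hpu huq

theorem sub_affine (h : WrightConcaveOn s e) (a b : ℝ) :
    WrightConcaveOn s (fun u ↦ e u - (a * u + b)) := by
  intro p hp q hq u hpu huq
  linarith [h hp hq u hpu huq]

theorem comp_reflect (h : WrightConcaveOn (Icc x y) e) :
    WrightConcaveOn (Icc x y) (fun u ↦ e (x + y - u)) := by
  intro p hp q hq u hpu huq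
  have := h (q := x + y - p) ⟨by linarith [hq.2], by linarith [hq.1]⟩
    (p := x + y - q) ⟨by linarith [hp.2], by linarith [hp.1]⟩ (x + y - (p + q - u))
    (by linarith) (by linarith)
  simp only at this ⊢
  rw [show x + y - q + (x + y - p) - (x + y - (p + q - u)) = x + y - u by ring] at this
  linarith

theorem add_le_two_mul_midpoint (h : WrightConcaveOn s e) {p q : ℝ} (hp : p ∈ s) (hq : q ∈ s) :
    e p + e q ≤ 2 * e ((p + q) / 2) := by
  wlog hpq : p ≤ q generalizing p q
  · rw [add_comm, add_comm p]
    exact this hq hp (le_of_not_ge hpq)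
  have := h hp hq ((p + q) / 2) (by linarith) (by linarith)
  rw [show p + q - (p + q) / 2 = (p + q) / 2 by ring] at this
  linarith

theorem mul_le_two_mul_integral (h : WrightConcaveOn (Icc x y) e) (hx : e x = 0) {c : ℝ}
    (hc : c ∈ Icc x y) (hint : IntervalIntegrable e volume x c) :
    (c - x) * e c ≤ 2 * ∫ u in x..c, e u := by
  have hint' : IntervalIntegrable (fun u ↦ e (x + c - u)) volume x c := by
    simpa using (hint.comp_sub_left (x + c)).symm
  have hmono : ∫ _ in x..c, e c ≤ ∫ u in x..c, (e u + e (x + c - u)) := by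
    refine intervalIntegral.integral_mono_on hc.1 intervalIntegrable_const (hint.add hint') ?_
    intro u hu
    have := h (left_mem_Icc.2 (hc.1.trans hc.2)) hc u hu.1 hu.2
    linarith
  rwa [intervalIntegral.integral_const, intervalIntegral.integral_add hint hint',
    intervalIntegral.integral_comp_add_sub, smul_eq_mul, ← two_mul] at hmono

theorem integral_le_mul (h : WrightConcaveOn (Icc x y) e) {z : ℝ} (hxz : x ≤ z)
    (hzy : 2 * z - x ≤ y) (hint : IntervalIntegrable e volume x (2 * z - x)) :
    ∫ u in x..(2 * z - x), e u ≤ 2 * (z - x) * e z := by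
  have hint' : IntervalIntegrable (fun u ↦ e (x + (2 * z - x) - u)) volume x (2 * z - x) := by
    simpa using (hint.comp_sub_left (x + (2 * z - x))).symm
  have hmono : ∫ u in x..(2 * z - x), (e u + e (x + (2 * z - x) - u))
      ≤ ∫ _ in x..(2 * z - x), 2 * e z := by
    refine intervalIntegral.integral_mono_on (by linarith) (hint.add hint')
      intervalIntegrable_const ?_
    intro u hu
    have := h.add_le_two_mul_midpoint (p := u) (q := x + (2 * z - x) - u)
      ⟨hu.1, by linarith [hu.2]⟩ ⟨by linarith [hu.2], by linarith [hu.1]⟩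
    rwa [show (u + (x + (2 * z - x) - u)) / 2 = z by ring] at this
  rw [intervalIntegral.integral_const, intervalIntegral.integral_add hint hint',
    intervalIntegral.integral_comp_add_sub, smul_eq_mul] at hmono
  linarith

theorem integral_nonneg (h : WrightConcaveOn (Icc x y) e) (hx : e x = 0) (hy : e y = 0)
    (hint : IntervalIntegrable e volume x y) {c : ℝ} (hc : c ∈ Icc x y) :
    0 ≤ ∫ u in x..c, e u := by
  set F : ℝ → ℝ := fun c ↦ ∫ u in x..c, e u
  have hxy : x ≤ y := hc.1.trans hc.2
  have hint_sub : ∀ c ∈ Icc x y, IntervalIntegrable e volume x c := fun c hc ↦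
    hint.mono_set (uIcc_subset_uIcc left_mem_uIcc (Icc_subset_uIcc hc))
  have hF_cont : ContinuousOn F (Icc x y) := by
    simpa [uIcc_of_le hxy] using intervalIntegral.continuousOn_primitive_interval' hint
      (left_mem_uIcc (a := x) (b := y))
  -- `(c - x) e(c) ≤ 2 F(c)` forces `e < 0` wherever `F < 0`, so `F` would decrease to the
  -- right of a negative minimum.
  obtain ⟨m, hm, hmin⟩ := isCompact_Icc.exists_isMinOn ⟨c, hc⟩ hF_cont
  refine le_trans ?_ (hmin hc)
  by_contra! hFm
  have hFy : 0 ≤ F y := by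
    have := h.mul_le_two_mul_integral hx (right_mem_Icc.2 hxy) hint
    rw [hy, mul_zero] at this
    linarith
  have hxm : x < m := hm.1.lt_of_ne (by rintro rfl; simp [F] at hFm)
  have hmy : m < y := hm.2.lt_of_ne (by rintro rfl; linarith)
  have hneg : {u | F u < 0} ∩ Icc x y ∈ nhds m := by
    have hcont : ContinuousAt F m := hF_cont.continuousAt (Icc_mem_nhds hxm hmy)
    exact inter_mem (hcont.eventually (gt_mem_nhds hFm)) (Icc_mem_nhds hxm hmy)
  obtain ⟨m', hmm', hsub⟩ := exists_Ico_subset_of_mem_nhds hneg ⟨y, hmy⟩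
  have he_neg : ∀ u ∈ Ioo m m', e u < 0 := by
    intro u hu
    obtain ⟨hFu, hu'⟩ := hsub (Ioo_subset_Ico_self hu)
    have := h.mul_le_two_mul_integral hx hu' (hint_sub u hu')
    have hFu : F u < 0 := hFu
    nlinarith [hu.1]
  obtain ⟨m₁, hmm₁, hm₁m'⟩ := exists_between hmm'
  have hm₁ : m₁ ∈ Icc x y := (hsub ⟨hmm₁.le, hm₁m'⟩).2
  have hint_m : IntervalIntegrable e volume m m₁ :=
    hint.mono_set (uIcc_subset_uIcc (Icc_subset_uIcc hm) (Icc_subset_uIcc hm₁))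
  have hdrop : ∫ u in m..m₁, e u < 0 := by
    have := intervalIntegral.intervalIntegral_pos_of_pos_on (f := fun u ↦ -e u) hint_m.neg
      (fun u hu ↦ neg_pos.2 (he_neg u ⟨hu.1, hu.2.trans hm₁m'⟩)) hmm₁
    rwa [intervalIntegral.integral_neg, neg_pos] at this
  have hsplit : F m₁ = F m + ∫ u in m..m₁, e u :=
    (intervalIntegral.integral_add_adjacent_intervals (hint_sub m hm) hint_m).symm
  linarith [show F m ≤ F m₁ from hmin hm₁]

theorem nonneg_of_two_mul_le (h : WrightConcaveOn (Icc x y) e) (hx : e x = 0) (hy : e y = 0)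
    (hint : IntervalIntegrable e volume x y) {z : ℝ} (hz : z ∈ Icc x y) (hz2 : 2 * z ≤ x + y) :
    0 ≤ e z := by
  rcases hz.1.eq_or_lt with rfl | hxz
  · exact hx.ge
  have hc : 2 * z - x ∈ Icc x y := ⟨by linarith, by linarith⟩
  have hint_c : IntervalIntegrable e volume x (2 * z - x) :=
    hint.mono_set (uIcc_subset_uIcc left_mem_uIcc (Icc_subset_uIcc hc))
  have := (h.integral_nonneg hx hy hint hc).trans (h.integral_le_mul hz.1 hc.2 hint_c)
  nlinarith

theorem nonneg (h : WrightConcaveOn (Icc x y) e) (hx : e x = 0) (hy : e y = 0)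
    (hint : IntervalIntegrable e volume x y) {z : ℝ} (hz : z ∈ Icc x y) : 0 ≤ e z := by
  rcases le_total (2 * z) (x + y) with hz2 | hz2
  · exact h.nonneg_of_two_mul_le hx hy hint hz hz2
  have hint' : IntervalIntegrable (fun u ↦ e (x + y - u)) volume x y := by
    simpa using (hint.comp_sub_left (x + y)).symm
  have := h.comp_reflect.nonneg_of_two_mul_le (by simpa using hy) (by simpa using hx) hint'
    (z := x + y - z) ⟨by linarith [hz.2], by linarith [hz.1]⟩ (by linarith)
  simpa using this

theorem mul_add_mul_le (h : WrightConcaveOn (Icc x y) e) (hxy : x < y)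
    (hint : IntervalIntegrable e volume x y) {a b : ℝ} (ha : 0 ≤ a) (hb : 0 ≤ b)
    (hab : a + b = 1) : a * e x + b * e y ≤ e (a * x + b * y) := by
  obtain rfl : a = 1 - b := eq_sub_of_add_eq hab
  set k := (e y - e x) / (y - x)
  have hyx : y - x ≠ 0 := by linarith
  have hline : IntervalIntegrable (fun u ↦ k * u + (e x - k * x)) volume x y :=
    (by fun_prop : Continuous _).intervalIntegrable x y
  have hchord := (h.sub_affine k (e x - k * x)).nonneg (by ring)
    (by simp only [k]; field_simp; ring) (hint.sub hline)
    (z := (1 - b) * x + b * y) ⟨by nlinarith, by nlinarith⟩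
  have hk : k * ((1 - b) * x + b * y) + (e x - k * x) = (1 - b) * e x + b * e y := by
    simp only [k]; field_simp; ring
  linarith

theorem concaveOn (hs : Convex ℝ s) (h : WrightConcaveOn s e)
    (hint : ∀ p ∈ s, ∀ q ∈ s, IntervalIntegrable e volume p q) : ConcaveOn ℝ s e := by
  refine LinearOrder.concaveOn_of_lt hs fun p hp q hq hpq a b ha hb hab ↦ ?_
  have hsub : Icc p q ⊆ s := (convex_iff_ordConnected.1 hs).out hp hq
  exact (h.mono hsub).mul_add_mul_le hpq (hint p hp q hq) ha.le hb.le hab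

end WrightConcaveOn

def IsLogConcave (f : ℝ → ℝ) : Prop :=
  ∀ x y t : ℝ, 0 ≤ t → t ≤ 1 → f x ^ t * f y ^ (1 - t) ≤ f (t * x + (1 - t) * y)

theorem isTP2_univ_sub_iff {f : ℝ → ℝ} :
    IsTP2 univ univ (fun x y ↦ f (x - y)) ↔
      ∀ a b d, a ≤ b → b ≤ d → f a * f d ≤ f b * f (a + d - b) := by
  constructor
  · intro h a b d hab hbd
    have := h b trivial d trivial 0 trivial (b - a) trivial hbd (by linarith)
    simpa [show d - (b - a) = a + d - b by ring] using this
  · intro h x₁ _ x₂ _ y₁ _ y₂ _ hx hy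
    have := h (x₁ - y₂) (x₁ - y₁) (x₂ - y₁) (by linarith) (by linarith)
    simpa [show x₁ - y₂ + (x₂ - y₁) - (x₁ - y₁) = x₂ - y₂ by ring] using this

theorem IsLogConcave.apply_mul_apply_le {f : ℝ → ℝ} (h : IsLogConcave f) (hf0 : ∀ x, 0 ≤ f x)
    {a b d : ℝ} (hab : a ≤ b) (hbd : b ≤ d) : f a * f d ≤ f b * f (a + d - b) := by
  rcases (hab.trans hbd).eq_or_lt with rfl | had
  · obtain rfl := le_antisymm hab hbd
    simp
  set t := (d - b) / (d - a)
  have ht0 : 0 ≤ t := div_nonneg (by linarith) (by linarith)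
  have ht1 : t ≤ 1 := (div_le_one (by linarith)).2 (by linarith)
  have hb : t * a + (1 - t) * d = b := by simp only [t]; field_simp; ring
  have hc : (1 - t) * a + (1 - (1 - t)) * d = a + d - b := by simp only [t]; field_simp; ring
  have h₁ := h a d t ht0 ht1
  have h₂ := h a d (1 - t) (by linarith) (by linarith)
  rw [hb] at h₁
  rw [hc, sub_sub_cancel] at h₂
  calc f a * f d = (f a ^ t * f d ^ (1 - t)) * (f a ^ (1 - t) * f d ^ t) := by
        rw [mul_mul_mul_comm, ← Real.rpow_add' (hf0 a) (by simp), mul_comm (f d ^ _),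
          ← Real.rpow_add' (hf0 d) (by simp), add_sub_cancel,
          Real.rpow_one, Real.rpow_one]
    _ ≤ f b * f (a + d - b) :=
        mul_le_mul h₁ h₂ (mul_nonneg (Real.rpow_nonneg (hf0 a) _) (Real.rpow_nonneg (hf0 d) _))
          (hf0 b)

theorem pos_of_mem_Icc_of_wright {f : ℝ → ℝ} (hf0 : ∀ x, 0 ≤ f x)
    (hW : ∀ a b d, a ≤ b → b ≤ d → f a * f d ≤ f b * f (a + d - b)) {p q u : ℝ}
    (hp : 0 < f p) (hq : 0 < f q) (hu : u ∈ Icc p q) : 0 < f u :=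
  pos_of_mul_pos_left ((mul_pos hp hq).trans_le (hW p u q hu.1 hu.2)) (hf0 _)

theorem convex_setOf_pos_of_wright {f : ℝ → ℝ} (hf0 : ∀ x, 0 ≤ f x)
    (hW : ∀ a b d, a ≤ b → b ≤ d → f a * f d ≤ f b * f (a + d - b)) :
    Convex ℝ {u | 0 < f u} :=
  convex_iff_ordConnected.2 ⟨fun _ hp _ hq _ hu ↦ pos_of_mem_Icc_of_wright hf0 hW hp hq hu⟩

theorem wrightConcaveOn_log {f : ℝ → ℝ} (hf0 : ∀ x, 0 ≤ f x)
    (hW : ∀ a b d, a ≤ b → b ≤ d → f a * f d ≤ f b * f (a + d - b)) :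
    WrightConcaveOn {u | 0 < f u} (fun u ↦ Real.log (f u)) := by
  intro p hp q hq u hpu huq
  have hu := pos_of_mem_Icc_of_wright hf0 hW hp hq ⟨hpu, huq⟩
  have hu' := pos_of_mem_Icc_of_wright hf0 hW hp hq
    (u := p + q - u) ⟨by linarith, by linarith⟩
  rw [← Real.log_mul hp.ne' hq.ne', ← Real.log_mul hu.ne' hu'.ne']
  exact Real.log_le_log (mul_pos hp hq) (hW p u q hpu huq)

theorem intervalIntegrable_log_of_wright {f : ℝ → ℝ} (hf0 : ∀ x, 0 ≤ f x)
    (hW : ∀ a b d, a ≤ b → b ≤ d → f a * f d ≤ f b * f (a + d - b))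
    (hmeas : Measurable f) (hint : Integrable f) {p q : ℝ} (hp : 0 < f p) (hq : 0 < f q) :
    IntervalIntegrable (fun u ↦ Real.log (f u)) volume p q := by
  wlog hpq : p ≤ q generalizing p q
  · exact (this hq hp (le_of_not_ge hpq)).symm
  -- `log f u ≤ f u - 1`, and `log f u ≥ log f p + log f q - log f (p + q - u)` by Wright.
  have hbound : IntervalIntegrable
      (fun u ↦ f u + f (p + q - u) + |Real.log (f p) + Real.log (f q)|) volume p q := by
    have hrefl : IntervalIntegrable (fun u ↦ f (p + q - u)) volume p q := by
      simpa using (hint.intervalIntegrable (a := p) (b := q)).comp_sub_left (p + q) |>.symm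
    exact (hint.intervalIntegrable.add hrefl).add intervalIntegrable_const
  refine hbound.mono_fun' hmeas.log.aestronglyMeasurable ?_
  filter_upwards [ae_restrict_mem measurableSet_uIoc] with u hu
  rw [uIoc_of_le hpq] at hu
  have hu_pos := pos_of_mem_Icc_of_wright hf0 hW hp hq ⟨hu.1.le, hu.2⟩
  have hu'_pos := pos_of_mem_Icc_of_wright hf0 hW hp hq
    (u := p + q - u) ⟨by linarith [hu.2], by linarith [hu.1]⟩
  have hlow := wrightConcaveOn_log hf0 hW hp hq u hu.1.le hu.2
  have hup := Real.log_le_sub_one_of_pos hu_pos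
  have hup' := Real.log_le_sub_one_of_pos hu'_pos
  simp only at hlow
  rw [Real.norm_eq_abs, abs_le]
  constructor <;> linarith [abs_nonneg (Real.log (f p) + Real.log (f q)),
    neg_abs_le (Real.log (f p) + Real.log (f q)), hf0 (p + q - u)]

theorem isLogConcave_of_concaveOn_log {f : ℝ → ℝ} (hf0 : ∀ x, 0 ≤ f x)
    (h : ConcaveOn ℝ {u | 0 < f u} (fun u ↦ Real.log (f u))) : IsLogConcave f := by
  intro x y t ht0 ht1
  rcases ht0.eq_or_lt with rfl | ht0
  · simp
  rcases ht1.eq_or_lt with rfl | ht1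
  · simp
  rcases (hf0 x).eq_or_lt with hx | hx
  · rw [← hx, Real.zero_rpow ht0.ne', zero_mul]
    exact hf0 _
  rcases (hf0 y).eq_or_lt with hy | hy
  · rw [← hy, Real.zero_rpow (sub_pos.2 ht1).ne', mul_zero]
    exact hf0 _
  have hz : 0 < f (t * x + (1 - t) * y) := h.1 hx hy ht0.le (sub_pos.2 ht1).le (by ring)
  have hlog := h.2 hx hy ht0.le (sub_pos.2 ht1).le (by ring)
  simp only [smul_eq_mul] at hlog
  calc f x ^ t * f y ^ (1 - t) = Real.exp (t * Real.log (f x) + (1 - t) * Real.log (f y)) := by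
        rw [Real.rpow_def_of_pos hx, Real.rpow_def_of_pos hy, ← Real.exp_add, mul_comm t,
          mul_comm (1 - t)]
    _ ≤ Real.exp (Real.log (f (t * x + (1 - t) * y))) := Real.exp_le_exp.2 hlog
    _ = f (t * x + (1 - t) * y) := Real.exp_log hz

theorem stmt3 (f : ℝ → ℝ)
    (hf0 : ∀ x, 0 ≤ f x) (hfmeas : Measurable f)
    (hf1 : ∫ x, f x = 1) :
    (∀ x y t : ℝ, 0 ≤ t → t ≤ 1 →
        f x ^ t * f y ^ (1 - t) ≤ f (t * x + (1 - t) * y)) ↔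
      IsTP2 univ univ (fun x y => f (x - y)) := by
  have hint : Integrable f := Integrable.of_integral_ne_zero (by simp [hf1])
  rw [isTP2_univ_sub_iff]
  refine ⟨fun h _ _ _ hab hbd ↦ IsLogConcave.apply_mul_apply_le h hf0 hab hbd, fun hW ↦ ?_⟩
  have hconc : ConcaveOn ℝ {u | 0 < f u} (fun u ↦ Real.log (f u)) :=
    (wrightConcaveOn_log hf0 hW).concaveOn (convex_setOf_pos_of_wright hf0 hW)
      fun _ hp _ hq ↦ intervalIntegrable_log_of_wright hf0 hW hfmeas hint hp hq
  exact isLogConcave_of_concaveOn_log hf0 hconc
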